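/- Let 0 ≤ t* ≤ T* ≤ T and assume β(s) ≥ ū for a.e. s ∈ [t*, T*] and 0 ≤ β(s) ≤ ū for a.e. s ∈ [T*, T]. Fix t with t* ≤ t ≤ T and set ŷ_t = ȳ − max( ∫_t^{max(T*,t)} (β(s) − ū) ds , 0 ). Then there exists a control admissible for (t, y) if and only if y ∈ [0, ŷ_t]. -/

import Mathlib

/-!
Discharging at the maximal rate `ū` gives the lowest trajectory `y + ∫_t^s (β - ū)`. Since
`β ≥ ū` on `[t, m]`, `m = max T* t`, this trajectory rises there from `y` to
`y + ∫_t^m (β - ū)`, so admissibility forces `0 ≤ y` and `y + ∫_t^m (β - ū) ≤ ȳ`. Conversely,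
discharging `ū` until `m` and exactly the inflow afterwards (allowed since `0 ≤ β ≤ ū` after
`T*`) freezes the level from `m` on, so this control is admissible under these two conditions.
-/

open MeasureTheory

noncomputable section

/-- A control: measurable, valued in `[0, ubar]` a.e. on `[t, T]`. -/
def IsControl (t T ubar : ℝ) (u : ℝ → ℝ) : Prop :=
  Measurable u ∧ ∀ᵐ s ∂(volume : Measure ℝ), s ∈ Set.Icc t T → u s ∈ Set.Icc 0 ubar

/-- Reservoir level `Y^{t,y,u}(s) = y + ∫_t^s (β(r) − u(r)) dr`. -/
def traj (t : ℝ) (β : ℝ → ℝ) (y : ℝ) (u : ℝ → ℝ) (s : ℝ) : ℝ :=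
  y + ∫ r in t..s, (β r - u r)

/-- A control admissible for `(t, y)`: the trajectory stays in `K = [0, ybar]` on `[t, T]`. -/
def Admissible (t T ubar ybar : ℝ) (β : ℝ → ℝ) (y : ℝ) (u : ℝ → ℝ) : Prop :=
  IsControl t T ubar u ∧ ∀ s ∈ Set.Icc t T, traj t β y u s ∈ Set.Icc 0 ybar

/-- Deterministic price `P(s) = x e^{b(s−t)}`. -/
def price (t x b s : ℝ) : ℝ := x * Real.exp (b * (s - t))

/-- Cost functional of the level-set (auxiliary) problem. -/
def levelCost (t T ubar ybar x b : ℝ) (β : ℝ → ℝ) (y z : ℝ) (u : ℝ → ℝ) : ℝ :=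
  max (z - ∫ s in t..T, price t x b s * (u s - ubar)) 0
    + ∫ s in t..T, Metric.infDist (traj t β y u s) (Set.Icc 0 ybar)

/-- The level-set function `W`. -/
def W (t T ubar ybar x b : ℝ) (β : ℝ → ℝ) (y z : ℝ) : ℝ :=
  sInf {c : ℝ | ∃ u, IsControl t T ubar u ∧ c = levelCost t T ubar ybar x b β y z u}

/-- `G(t,x) = ū ∫_t^T P(s) ds`. -/
def G (t T ubar x b : ℝ) : ℝ := ubar * ∫ s in t..T, price t x b s

open Set

def maxDischargeUntil (m ubar : ℝ) (β : ℝ → ℝ) (s : ℝ) : ℝ :=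
  if s ≤ m then ubar else β s

lemma IsControl.intervalIntegrable {t T ubar s : ℝ} {u : ℝ → ℝ} (hu : IsControl t T ubar u)
    (hs : s ∈ Icc t T) : IntervalIntegrable u volume t s := by
  refine (intervalIntegrable_const (c := ubar)).mono_fun' hu.1.aestronglyMeasurable ?_
  rw [Filter.EventuallyLE, ae_restrict_iff' measurableSet_uIoc]
  filter_upwards [hu.2] with r hr hrts
  rw [uIoc_of_le hs.1] at hrts
  obtain ⟨hr0, hr1⟩ := hr ⟨hrts.1.le, hrts.2.trans hs.2⟩
  simpa [abs_of_nonneg hr0] using hr1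

lemma isControl_maxDischargeUntil {t T m ubar : ℝ} {β : ℝ → ℝ} (hub : 0 ≤ ubar)
    (hβm : Measurable β) (hβ : ∀ᵐ s ∂(volume : Measure ℝ), s ∈ Icc m T → β s ∈ Icc 0 ubar) :
    IsControl t T ubar (maxDischargeUntil m ubar β) := by
  refine ⟨measurable_const.ite measurableSet_Iic hβm, ?_⟩
  filter_upwards [hβ] with s hs hsT
  by_cases hsm : s ≤ m
  · simpa [maxDischargeUntil, hsm] using hub
  · simpa [maxDischargeUntil, hsm] using hs ⟨(not_le.1 hsm).le, hsT.2⟩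

section traj

variable {t : ℝ} {β u v : ℝ → ℝ} {y s : ℝ}

@[simp]
lemma traj_self : traj t β y u t = y := by
  simp [traj]

lemma traj_add_integral {s' : ℝ} (h₁ : IntervalIntegrable (fun r => β r - u r) volume t s)
    (h₂ : IntervalIntegrable (fun r => β r - u r) volume s s') :
    traj t β y u s' = traj t β y u s + ∫ r in s..s', (β r - u r) := by
  rw [traj, traj, add_assoc, intervalIntegral.integral_add_adjacent_intervals h₁ h₂]

lemma traj_le_traj_of_ae_le (hts : t ≤ s) (hβ : IntervalIntegrable β volume t s)
    (hu : IntervalIntegrable u volume t s) (hv : IntervalIntegrable v volume t s)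
    (huv : ∀ᵐ r ∂(volume : Measure ℝ), r ∈ Icc t s → u r ≤ v r) :
    traj t β y v s ≤ traj t β y u s := by
  refine (add_le_add_iff_left y).2
    (intervalIntegral.integral_mono_ae_restrict hts (hβ.sub hv) (hβ.sub hu) ?_)
  filter_upwards [(ae_restrict_iff' measurableSet_Icc).2 huv] with r hr
  exact sub_le_sub_left hr (β r)

lemma monotoneOn_traj {b : ℝ} (hint : IntervalIntegrable (fun r => β r - u r) volume t b)
    (huβ : ∀ᵐ r ∂(volume : Measure ℝ), r ∈ Icc t b → u r ≤ β r) :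
    MonotoneOn (traj t β y u) (Icc t b) := by
  intro x hx x' hx' hxx'
  have hint' : ∀ {c d}, c ∈ Icc t b → d ∈ Icc t b →
      IntervalIntegrable (fun r => β r - u r) volume c d := fun hc hd =>
    hint.mono_set (uIcc_of_le (hx.1.trans hx.2) ▸ uIcc_subset_Icc hc hd)
  rw [traj_add_integral (hint' (left_mem_Icc.2 (hx.1.trans hx.2)) hx) (hint' hx hx')]
  refine le_add_of_nonneg_right (intervalIntegral.integral_nonneg_of_ae_restrict hxx' ?_)
  filter_upwards [ae_restrict_of_ae huβ, ae_restrict_mem measurableSet_Icc] with r hr hrx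
  exact sub_nonneg.2 (hr ⟨hx.1.trans hrx.1, hrx.2.trans hx'.2⟩)

lemma traj_maxDischargeUntil {m ubar : ℝ} (htm : t ≤ m) (hβ : IntervalIntegrable β volume t m)
    (hts : t ≤ s) :
    traj t β y (maxDischargeUntil m ubar β) s = traj t β y (fun _ => ubar) (min s m) := by
  rcases le_total s m with hsm | hms
  · rw [min_eq_left hsm, traj, traj, intervalIntegral.integral_congr fun r hr => ?_]
    rw [uIcc_of_le hts] at hr
    simp [maxDischargeUntil, hr.2.trans hsm]
  · have hbefore : EqOn (fun r => β r - maxDischargeUntil m ubar β r) (fun r => β r - ubar)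
        (uIoc t m) := fun r hr => by
      rw [uIoc_of_le htm] at hr
      simp [maxDischargeUntil, hr.2]
    have hafter : EqOn (fun r => β r - maxDischargeUntil m ubar β r) 0 (uIoc m s) :=
      fun r hr => by
        rw [uIoc_of_le hms] at hr
        simp [maxDischargeUntil, not_le.2 hr.1]
    rw [min_eq_right hms, traj_add_integral ((intervalIntegrable_congr hbefore).2
        (hβ.sub intervalIntegrable_const)) ((intervalIntegrable_congr hafter).2 .zero),
      intervalIntegral.integral_congr_ae (ae_of_all _ fun r hr => hafter hr),
      Pi.zero_def, intervalIntegral.integral_zero, add_zero, traj, traj,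
      intervalIntegral.integral_congr_ae (ae_of_all _ fun r hr => hbefore hr)]

end traj

section admissible

variable {t T ubar ybar y s : ℝ} {β u : ℝ → ℝ}

lemma Admissible.traj_const_le (hu : Admissible t T ubar ybar β y u) (hs : s ∈ Icc t T)
    (hβ : IntervalIntegrable β volume t s) : traj t β y (fun _ => ubar) s ≤ ybar :=
  calc traj t β y (fun _ => ubar) s
      ≤ traj t β y u s :=
        traj_le_traj_of_ae_le hs.1 hβ (hu.1.intervalIntegrable hs) intervalIntegrable_const
          (by filter_upwards [hu.1.2] with r hr hrs using (hr ⟨hrs.1, hrs.2.trans hs.2⟩).2)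
    _ ≤ ybar := (hu.2 s hs).2

lemma admissible_maxDischargeUntil {m : ℝ} (htm : t ≤ m) (hub : 0 ≤ ubar) (hβm : Measurable β)
    (hβ : IntervalIntegrable β volume t m)
    (hfill : ∀ᵐ r ∂(volume : Measure ℝ), r ∈ Icc t m → ubar ≤ β r)
    (hafter : ∀ᵐ r ∂(volume : Measure ℝ), r ∈ Icc m T → β r ∈ Icc 0 ubar)
    (hy : 0 ≤ y) (hfull : traj t β y (fun _ => ubar) m ≤ ybar) :
    Admissible t T ubar ybar β y (maxDischargeUntil m ubar β) := by
  refine ⟨isControl_maxDischargeUntil hub hβm hafter, fun s hs => ?_⟩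
  have hmono : MonotoneOn (traj t β y fun _ => ubar) (Icc t m) :=
    monotoneOn_traj (hβ.sub intervalIntegrable_const) hfill
  have hsm : min s m ∈ Icc t m := ⟨le_min hs.1 htm, min_le_right _ _⟩
  rw [traj_maxDischargeUntil htm hβ hs.1]
  exact ⟨hy.trans (by simpa using hmono (left_mem_Icc.2 htm) hsm hsm.1),
    (hmono hsm (right_mem_Icc.2 htm) hsm.2).trans hfull⟩

end admissible

theorem stmt7_general (t T tstar Tstar ubar ybar : ℝ) (β : ℝ → ℝ)
    (h2 : Tstar ≤ T)
    (hub : 0 < ubar)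
    (hβm : Measurable β) (hβb : ∃ M', ∀ s, |β s| ≤ M')
    (hfill : ∀ᵐ s ∂(volume : Measure ℝ), s ∈ Set.Icc tstar Tstar → ubar ≤ β s)
    (hafter : ∀ᵐ s ∂(volume : Measure ℝ), s ∈ Set.Icc Tstar T → β s ∈ Set.Icc 0 ubar)
    (htt : tstar ≤ t) (htT : t ≤ T) (y : ℝ) :
    (∃ u, Admissible t T ubar ybar β y u)
      ↔ y ∈ Set.Icc (0 : ℝ) (ybar - max (∫ s in t..(max Tstar t), (β s - ubar)) 0) := by
  set m := max Tstar t
  obtain ⟨M, hM⟩ := hβb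
  have htm : t ≤ m := le_max_right _ _
  have hβ : IntervalIntegrable β volume t m :=
    intervalIntegrable_const.mono_fun' hβm.aestronglyMeasurable (ae_of_all _ hM)
  -- `[t, m]` is either `{t}` or contained in `[tstar, Tstar]`
  have hfill' : ∀ᵐ r ∂(volume : Measure ℝ), r ∈ Icc t m → ubar ≤ β r := by
    filter_upwards [hfill, Measure.ae_ne volume t] with r hr hrt hrm
    exact hr ⟨htt.trans hrm.1, (le_max_iff.1 hrm.2).resolve_right
      fun h => hrt (le_antisymm h hrm.1)⟩
  have hA : ∫ s in t..m, (β s - ubar) = traj t β y (fun _ => ubar) m - y := by simp [traj]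
  have hA0 : y ≤ traj t β y (fun _ => ubar) m := by
    simpa using monotoneOn_traj (y := y) (hβ.sub intervalIntegrable_const) hfill'
      (left_mem_Icc.2 htm) (right_mem_Icc.2 htm) htm
  rw [hA, max_eq_left (sub_nonneg.2 hA0), mem_Icc, le_sub_iff_add_le, add_sub_cancel]
  constructor
  · rintro ⟨u, hu⟩
    exact ⟨by simpa using (hu.2 t ⟨le_rfl, htT⟩).1, hu.traj_const_le ⟨htm, max_le h2 htT⟩ hβ⟩
  · rintro ⟨hy, hfull⟩
    refine ⟨_, admissible_maxDischargeUntil htm hub.le hβm hβ hfill' ?_ hy hfull⟩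
    filter_upwards [hafter] with r hr hrm using hr ⟨(le_max_left _ _).trans hrm.1, hrm.2⟩

/-- Proposition 4.1 (for initial times `t ≥ t*`): with `β ≥ ū` a.e. on `[t*, T*]` and
`0 ≤ β ≤ ū` a.e. on `[T*, T]`, an admissible control for `(t, y)` exists iff
`y ∈ [0, ŷ_t]` where `ŷ_t = ȳ − max(∫_t^{max(T*,t)} (β(s) − ū) ds, 0)`. -/
theorem stmt7 (t T tstar Tstar ubar ybar : ℝ) (β : ℝ → ℝ)
    (hts : 0 ≤ tstar) (h1 : tstar ≤ Tstar) (h2 : Tstar ≤ T)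
    (hub : 0 < ubar) (hyb : 0 < ybar)
    (hβm : Measurable β) (hβb : ∃ M', ∀ s, |β s| ≤ M')
    (hfill : ∀ᵐ s ∂(volume : Measure ℝ), s ∈ Set.Icc tstar Tstar → ubar ≤ β s)
    (hafter : ∀ᵐ s ∂(volume : Measure ℝ), s ∈ Set.Icc Tstar T → β s ∈ Set.Icc 0 ubar)
    (htt : tstar ≤ t) (htT : t ≤ T) (y : ℝ) :
    (∃ u, Admissible t T ubar ybar β y u)
      ↔ y ∈ Set.Icc (0 : ℝ) (ybar - max (∫ s in t..(max Tstar t), (β s - ubar)) 0) :=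
  stmt7_general t T tstar Tstar ubar ybar β h2 hub hβm hβb hfill hafter htt htT y
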